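/- Let S, T, C ∈ L†(D,H) satisfy the weak commutation relation [S,T] = C, i.e. ⟨Tξ, S†η⟩ − ⟨Sξ, T†η⟩ = ⟨Cξ, η⟩ for all ξ, η ∈ D, and assume in addition that [S†,T] − [S,T†] = 0 in weak sense, i.e. ⟨Tξ, Sη⟩ − ⟨S†ξ, T†η⟩ = ⟨T†ξ, S†η⟩ − ⟨Sξ, Tη⟩ for all ξ, η ∈ D. Then for every φ ∈ D with ‖φ‖ = 1: ((ΔS)_φ + (ΔS†)_φ)·((ΔT)_φ + (ΔT†)_φ) ≥ |Re⟨φ, Cφ⟩|. -/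

import Mathlib

/-!
Write `Δ_A := Aφ - ⟨φ, Aφ⟩ φ` for the component of `Aφ` orthogonal to the unit vector `φ`, so that
`(ΔA)_φ = ‖Δ_A‖`. Since `⟨φ, S†φ⟩` and `⟨φ, T†φ⟩` are the conjugates of `⟨φ, Sφ⟩` and `⟨φ, Tφ⟩`,
the mean-value corrections cancel in the commutation relation and
`⟨Cφ, φ⟩ = ⟨Δ_T, Δ_{S†}⟩ - ⟨Δ_S, Δ_{T†}⟩`. Cauchy–Schwarz then bounds its real part by
`‖Δ_T‖ ‖Δ_{S†}‖ + ‖Δ_S‖ ‖Δ_{T†}‖ ≤ (‖Δ_S‖ + ‖Δ_{S†}‖) (‖Δ_T‖ + ‖Δ_{T†}‖)`.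
-/

/-- The uncertainty (ΔA)_φ = (‖Aφ‖² − |⟨Aφ, φ⟩|²)^{1/2} of an operator A ∈ L†(D,H) in the
state φ ∈ D. -/
noncomputable def uncertainty {H : Type*} [NormedAddCommGroup H] [InnerProductSpace ℂ H]
    {D : Submodule ℂ H} (A : D →ₗ[ℂ] H) (φ : D) : ℝ :=
  Real.sqrt (‖A φ‖ ^ 2 - (‖(inner ℂ (A φ) (φ : H) : ℂ)‖) ^ 2)

open scoped InnerProductSpace ComplexConjugate

section UnitVector

variable {𝕜 E : Type*} [RCLike 𝕜] [NormedAddCommGroup E] [InnerProductSpace 𝕜 E]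

theorem inner_sub_inner_smul_sub_inner_smul {v : E} (hv : ‖v‖ = 1) (x y : E) :
    ⟪x - ⟪v, x⟫_𝕜 • v, y - ⟪v, y⟫_𝕜 • v⟫_𝕜 = ⟪x, y⟫_𝕜 - conj ⟪v, x⟫_𝕜 * ⟪v, y⟫_𝕜 := by
  have hvv : ⟪v, v⟫_𝕜 = 1 := by rw [inner_self_eq_norm_sq_to_K, hv]; simp
  simp only [inner_sub_left, inner_sub_right, inner_smul_left, inner_smul_right, hvv,
    ← inner_conj_symm v x, RCLike.conj_conj]
  ring

theorem norm_sub_inner_smul_sq {v : E} (hv : ‖v‖ = 1) (x : E) :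
    ‖x - ⟪v, x⟫_𝕜 • v‖ ^ 2 = ‖x‖ ^ 2 - ‖⟪x, v⟫_𝕜‖ ^ 2 := by
  have h := congrArg RCLike.re (inner_sub_inner_smul_sub_inner_smul (𝕜 := 𝕜) hv x x)
  rwa [inner_self_eq_norm_sq, map_sub, inner_self_eq_norm_sq, RCLike.conj_mul,
    ← RCLike.ofReal_pow, RCLike.ofReal_re, norm_inner_symm] at h

end UnitVector

section Deviation

variable {H : Type*} [NormedAddCommGroup H] [InnerProductSpace ℂ H] {D : Submodule ℂ H}

noncomputable def deviation (A : D →ₗ[ℂ] H) (φ : D) : H :=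
  A φ - ⟪(φ : H), A φ⟫_ℂ • (φ : H)

theorem uncertainty_eq_norm_deviation (A : D →ₗ[ℂ] H) {φ : D} (hφ : ‖(φ : H)‖ = 1) :
    uncertainty A φ = ‖deviation A φ‖ := by
  rw [uncertainty, deviation, ← norm_sub_inner_smul_sq hφ, Real.sqrt_sq (norm_nonneg _)]

theorem inner_deviation_deviation (A B : D →ₗ[ℂ] H) {φ : D} (hφ : ‖(φ : H)‖ = 1) :
    ⟪deviation A φ, deviation B φ⟫_ℂ = ⟪A φ, B φ⟫_ℂ - ⟪A φ, (φ : H)⟫_ℂ * ⟪(φ : H), B φ⟫_ℂ := by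
  rw [deviation, deviation, inner_sub_inner_smul_sub_inner_smul hφ, inner_conj_symm]

theorem inner_apply_self_eq_of_commutator {S Sd T Td C : D →ₗ[ℂ] H}
    (hS : ∀ ξ η : D, ⟪S ξ, (η : H)⟫_ℂ = ⟪(ξ : H), Sd η⟫_ℂ)
    (hT : ∀ ξ η : D, ⟪T ξ, (η : H)⟫_ℂ = ⟪(ξ : H), Td η⟫_ℂ)
    (hCR : ∀ ξ η : D, ⟪T ξ, Sd η⟫_ℂ - ⟪S ξ, Td η⟫_ℂ = ⟪C ξ, (η : H)⟫_ℂ)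
    {φ : D} (hφ : ‖(φ : H)‖ = 1) :
    ⟪C φ, (φ : H)⟫_ℂ =
      ⟪deviation T φ, deviation Sd φ⟫_ℂ - ⟪deviation S φ, deviation Td φ⟫_ℂ := by
  rw [inner_deviation_deviation _ _ hφ, inner_deviation_deviation _ _ hφ, ← hS, ← hT, ← hCR]
  ring

end Deviation

theorem uncertainty_relation_UR2_general_general
    {H : Type*} [NormedAddCommGroup H] [InnerProductSpace ℂ H]
    (D : Submodule ℂ H)
    (S Sd T Td C : D →ₗ[ℂ] H)
    (hS : ∀ ξ η : D, (inner ℂ (S ξ) (η : H) : ℂ) = inner ℂ (ξ : H) (Sd η))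
    (hT : ∀ ξ η : D, (inner ℂ (T ξ) (η : H) : ℂ) = inner ℂ (ξ : H) (Td η))
    -- weak commutation relation [S,T] = C
    (hCR : ∀ ξ η : D,
      (inner ℂ (T ξ) (Sd η) : ℂ) - (inner ℂ (S ξ) (Td η) : ℂ) = (inner ℂ (C ξ) (η : H) : ℂ)) :
    ∀ φ : D, ‖(φ : H)‖ = 1 →
      (uncertainty S φ + uncertainty Sd φ) * (uncertainty T φ + uncertainty Td φ)
        ≥ |((inner ℂ ((φ : H)) (C φ) : ℂ)).re| := by
  intro φ hφ
  simp only [uncertainty_eq_norm_deviation _ hφ]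
  set s := deviation S φ
  set s' := deviation Sd φ
  set t := deviation T φ
  set t' := deviation Td φ
  have hCS : |(⟪t, s'⟫_ℂ - ⟪s, t'⟫_ℂ).re| ≤ ‖t‖ * ‖s'‖ + ‖s‖ * ‖t'‖ :=
    calc |(⟪t, s'⟫_ℂ - ⟪s, t'⟫_ℂ).re| ≤ ‖⟪t, s'⟫_ℂ - ⟪s, t'⟫_ℂ‖ := Complex.abs_re_le_norm _
      _ ≤ ‖⟪t, s'⟫_ℂ‖ + ‖⟪s, t'⟫_ℂ‖ := norm_sub_le _ _
      _ ≤ ‖t‖ * ‖s'‖ + ‖s‖ * ‖t'‖ := add_le_add (norm_inner_le_norm _ _) (norm_inner_le_norm _ _)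
  rw [← inner_conj_symm, Complex.conj_re, inner_apply_self_eq_of_commutator hS hT hCR hφ,
    ge_iff_le]
  refine hCS.trans ?_
  nlinarith [mul_nonneg (norm_nonneg s) (norm_nonneg t),
    mul_nonneg (norm_nonneg s') (norm_nonneg t')]

theorem uncertainty_relation_UR2_general
    {H : Type*} [NormedAddCommGroup H] [InnerProductSpace ℂ H]
    (D : Submodule ℂ H) (hD : Dense (D : Set H))
    (S Sd T Td C Cd : D →ₗ[ℂ] H)
    (hS : ∀ ξ η : D, (inner ℂ (S ξ) (η : H) : ℂ) = inner ℂ (ξ : H) (Sd η))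
    (hT : ∀ ξ η : D, (inner ℂ (T ξ) (η : H) : ℂ) = inner ℂ (ξ : H) (Td η))
    (hC : ∀ ξ η : D, (inner ℂ (C ξ) (η : H) : ℂ) = inner ℂ (ξ : H) (Cd η))
    -- weak commutation relation [S,T] = C
    (hCR : ∀ ξ η : D,
      (inner ℂ (T ξ) (Sd η) : ℂ) - (inner ℂ (S ξ) (Td η) : ℂ) = (inner ℂ (C ξ) (η : H) : ℂ))
    -- [S†,T] − [S,T†] = 0 in weak sense
    (hsym : ∀ ξ η : D,
      (inner ℂ (T ξ) (S η) : ℂ) - (inner ℂ (Sd ξ) (Td η) : ℂ)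
        = (inner ℂ (Td ξ) (Sd η) : ℂ) - (inner ℂ (S ξ) (T η) : ℂ)) :
    ∀ φ : D, ‖(φ : H)‖ = 1 →
      (uncertainty S φ + uncertainty Sd φ) * (uncertainty T φ + uncertainty Td φ)
        ≥ |((inner ℂ ((φ : H)) (C φ) : ℂ)).re| :=
  uncertainty_relation_UR2_general_general D S Sd T Td C hS hT hCR
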